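/- (First arrow.) The distributed ADMM iterates satisfy ‖x_⊥^k‖ ≤ (1/μ)‖ã^k + ρΔy^k‖ for all k ≥ 1; consequently, for every λ ∈ (0,1) and every K ≥ 0, ‖x_⊥‖^{λ,K} ≤ (1/μ)‖ã + ρΔy‖^{λ,K}. -/

import Mathlib

/-!
Since `P x* = x*`, the disagreement `x_⊥^k = (I - P)(x^k - x*)` is the orthogonal projection of
`x^k - x*` onto `1^⊥`, so `‖x_⊥^k‖ ≤ ‖x^k - x*‖`. Combining the primal and dual updates of
step `k - 1` gives `∇f(x^k) - ∇f(x*) = -(ã^k + ρΔy^k)`, and strong monotonicity of `∇f`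
(a consequence of strong convexity) with Cauchy–Schwarz yields `μ‖x^k - x*‖ ≤ ‖ã^k + ρΔy^k‖`.
The weighted bound follows termwise, the `k = 0` term vanishing because `x^0 = 0`.
-/

open Matrix
open scoped RealInnerProductSpace

/-- The averaging matrix `P = (1/n)·11ᵀ`. -/
noncomputable def avgMatrix (n : ℕ) : Matrix (Fin n) (Fin n) ℝ :=
  Matrix.of fun _ _ => (n : ℝ)⁻¹

/-- Action of a matrix on a vector of `ℝⁿ` with the Euclidean norm. -/
noncomputable def mulE {n : ℕ} (M : Matrix (Fin n) (Fin n) ℝ)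
    (v : EuclideanSpace ℝ (Fin n)) : EuclideanSpace ℝ (Fin n) :=
  Matrix.toEuclideanLin M v

/-- Induced 2-norm of a matrix. -/
noncomputable def opNorm2 {n : ℕ} (M : Matrix (Fin n) (Fin n) ℝ) : ℝ :=
  ‖LinearMap.toContinuousLinearMap (Matrix.toEuclideanLin M)‖

/-- `‖s‖^{λ,K} = max_{0 ≤ k ≤ K} ‖s^k‖/λ^k`. -/
noncomputable def seqNormK {n : ℕ} (s : ℕ → EuclideanSpace ℝ (Fin n)) (lam : ℝ) (K : ℕ) : ℝ :=
  (Finset.range (K + 1)).sup' Finset.nonempty_range_add_one (fun k => ‖s k‖ / lam ^ k)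

section InnerProductSpace

variable {E : Type*} [NormedAddCommGroup E] [InnerProductSpace ℝ E]

theorem inner_grad_sub_ge_of_strongConvex {f : E → ℝ} {f' : E → E} {μ : ℝ}
    (hsc : ∀ z w, f z + ⟪f' z, w - z⟫ + μ / 2 * ‖w - z‖ ^ 2 ≤ f w) (z w : E) :
    μ * ‖w - z‖ ^ 2 ≤ ⟪f' w - f' z, w - z⟫ := by
  have hzw := hsc z w
  have hwz := hsc w z
  rw [norm_sub_rev z w, ← neg_sub w z, inner_neg_right] at hwz
  rw [inner_sub_left]
  linarith

theorem norm_le_of_mul_norm_sq_le_inner {μ : ℝ} (hμ : 0 < μ) {d g : E}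
    (h : μ * ‖d‖ ^ 2 ≤ ⟪g, d⟫) : ‖d‖ ≤ 1 / μ * ‖g‖ := by
  have hcs : μ * ‖d‖ ^ 2 ≤ ‖g‖ * ‖d‖ := h.trans (real_inner_le_norm g d)
  rw [one_div_mul_eq_div, le_div_iff₀ hμ]
  rcases (norm_nonneg d).eq_or_lt with hd | hd
  · rw [← hd]; simp
  · nlinarith

theorem norm_sub_le_of_inner_sub_eq_zero {v p : E} (h : ⟪v - p, p⟫ = 0) : ‖v - p‖ ≤ ‖v‖ := by
  have hpyth := norm_add_sq_eq_norm_sq_add_norm_sq_real h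
  rw [sub_add_cancel] at hpyth
  exact le_of_sq_le_sq (by nlinarith [sq_nonneg ‖p‖]) (norm_nonneg v)

end InnerProductSpace

section Averaging

variable {n : ℕ}

theorem mulE_sub (M : Matrix (Fin n) (Fin n) ℝ) (u v : EuclideanSpace ℝ (Fin n)) :
    mulE M (u - v) = mulE M u - mulE M v :=
  map_sub (Matrix.toEuclideanLin M) u v

theorem mulE_avgMatrix_apply (v : EuclideanSpace ℝ (Fin n)) (i : Fin n) :
    mulE (avgMatrix n) v i = (n : ℝ)⁻¹ * ∑ j, v j := by
  simp [mulE, avgMatrix, Matrix.mulVec, dotProduct, Finset.mul_sum]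

theorem inner_sub_mulE_avgMatrix (v : EuclideanSpace ℝ (Fin n)) :
    ⟪v - mulE (avgMatrix n) v, mulE (avgMatrix n) v⟫ = 0 := by
  simp only [PiLp.inner_apply, PiLp.sub_apply, mulE_avgMatrix_apply, RCLike.inner_apply,
    conj_trivial]
  rw [← Finset.mul_sum, Finset.sum_sub_distrib]
  simp only [Finset.sum_const, Finset.card_univ, Fintype.card_fin, nsmul_eq_mul]
  rcases eq_or_ne (n : ℝ) 0 with h | h
  · simp [h]
  · field_simp
    ring

theorem norm_sub_mulE_avgMatrix_le {c : EuclideanSpace ℝ (Fin n)}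
    (hc : mulE (avgMatrix n) c = c) (v : EuclideanSpace ℝ (Fin n)) :
    ‖v - mulE (avgMatrix n) v‖ ≤ ‖v - c‖ := by
  have hperp : v - mulE (avgMatrix n) v = (v - c) - mulE (avgMatrix n) (v - c) := by
    rw [mulE_sub, hc]
    abel
  rw [hperp]
  exact norm_sub_le_of_inner_sub_eq_zero (inner_sub_mulE_avgMatrix _)

end Averaging

theorem seqNormK_le_mul {n : ℕ} {s t : ℕ → EuclideanSpace ℝ (Fin n)} {lam c : ℝ} {K : ℕ}
    (hlam : 0 ≤ lam) (hc : 0 ≤ c) (h : ∀ k ≤ K, ‖s k‖ ≤ c * ‖t k‖) :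
    seqNormK s lam K ≤ c * seqNormK t lam K := by
  refine Finset.sup'_le _ _ fun k hk => ?_
  have hkK : k ≤ K := Nat.lt_succ_iff.mp (Finset.mem_range.mp hk)
  calc ‖s k‖ / lam ^ k ≤ c * (‖t k‖ / lam ^ k) := by
        rw [← mul_div_assoc]
        exact div_le_div_of_nonneg_right (h k hkK) (pow_nonneg hlam k)
    _ ≤ c * seqNormK t lam K :=
        mul_le_mul_of_nonneg_left (Finset.le_sup' (fun j => ‖t j‖ / lam ^ j) hk) hc

theorem grad_eq_of_admm_step {E : Type*} [AddCommGroup E] [Module ℝ E] {ρ : ℝ}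
    {g a a' x y y' : E} (hx : g + a + ρ • (x - y) = 0) (ha : a' = a + ρ • (x - y')) :
    g = -(a' + ρ • (y' - y)) := by
  linear_combination (norm := module) hx + ha

theorem admm_first_arrow_general {n : ℕ}
    (f : EuclideanSpace ℝ (Fin n) → ℝ)
    (f' : EuclideanSpace ℝ (Fin n) → EuclideanSpace ℝ (Fin n))
    (μ : ℝ) (hμ : 0 < μ)
    (hsc : ∀ z w, f z + ⟪f' z, w - z⟫ + μ / 2 * ‖w - z‖ ^ 2 ≤ f w)
    (ρ : ℝ)
    (x y a : ℕ → EuclideanSpace ℝ (Fin n))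
    (hx0 : x 0 = 0)
    (hxup : ∀ k, f' (x (k + 1)) + a k + ρ • (x (k + 1) - y k) = 0)
    (haup : ∀ k, a (k + 1) = a k + ρ • (x (k + 1) - y (k + 1)))
    (xstar : EuclideanSpace ℝ (Fin n))
    (hxstar_cons : mulE (avgMatrix n) xstar = xstar)
    (astar : EuclideanSpace ℝ (Fin n)) (hastar : astar = -f' xstar) :
    (∀ k, 1 ≤ k →
      ‖x k - mulE (avgMatrix n) (x k)‖ ≤ 1 / μ * ‖(a k - astar) + ρ • (y k - y (k - 1))‖) ∧
    (∀ lam : ℝ, lam ∈ Set.Ioo (0 : ℝ) 1 → ∀ K : ℕ,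
      seqNormK (fun k => x k - mulE (avgMatrix n) (x k)) lam K ≤
        1 / μ * seqNormK (fun k => (a k - astar) + ρ • (y k - y (k - 1))) lam K) := by
  have pointwise : ∀ k, 1 ≤ k →
      ‖x k - mulE (avgMatrix n) (x k)‖ ≤ 1 / μ * ‖(a k - astar) + ρ • (y k - y (k - 1))‖ := by
    rintro (_ | m) hk
    · omega
    have hgrad_sub : f' (x (m + 1)) - f' xstar = -((a (m + 1) - astar) + ρ • (y (m + 1) - y m)) := by
      rw [grad_eq_of_admm_step (hxup m) (haup m), hastar]
      abel
    have hmono := inner_grad_sub_ge_of_strongConvex hsc xstar (x (m + 1))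
    rw [hgrad_sub] at hmono
    calc ‖x (m + 1) - mulE (avgMatrix n) (x (m + 1))‖ ≤ ‖x (m + 1) - xstar‖ :=
          norm_sub_mulE_avgMatrix_le hxstar_cons _
      _ ≤ 1 / μ * ‖-((a (m + 1) - astar) + ρ • (y (m + 1) - y m))‖ :=
          norm_le_of_mul_norm_sq_le_inner hμ hmono
      _ = _ := by rw [norm_neg, Nat.add_sub_cancel]
  refine ⟨pointwise, fun lam hlam K => seqNormK_le_mul hlam.1.le (by positivity) fun k _ => ?_⟩
  rcases k with _ | k
  · rw [hx0, mulE, map_zero, sub_zero, norm_zero]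
    positivity
  · exact pointwise (k + 1) k.succ_pos

/-- **First arrow: `ã + ρΔy → x_⊥` with gain `1/μ`.** -/
theorem admm_first_arrow {n : ℕ} (hn : 1 ≤ n)
    (f : EuclideanSpace ℝ (Fin n) → ℝ)
    (f' : EuclideanSpace ℝ (Fin n) → EuclideanSpace ℝ (Fin n))
    (μ L : ℝ) (hμ : 0 < μ) (hL : 0 < L)
    (hgrad : ∀ z, HasGradientAt f (f' z) z)
    (hsc : ∀ z w, f z + ⟪f' z, w - z⟫ + μ / 2 * ‖w - z‖ ^ 2 ≤ f w)
    (hlip : ∀ z w, ‖f' z - f' w‖ ≤ L * ‖z - w‖)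
    (W : Matrix (Fin n) (Fin n) ℝ)
    (hWrow : W *ᵥ (fun _ => (1 : ℝ)) = fun _ => 1)
    (hWcol : Wᵀ *ᵥ (fun _ => (1 : ℝ)) = fun _ => 1)
    (hδ : opNorm2 (W - avgMatrix n) < 1)
    (ρ : ℝ) (hρ : 0 < ρ) (B : ℕ) (hB : 1 ≤ B)
    (x y a : ℕ → EuclideanSpace ℝ (Fin n))
    (hx0 : x 0 = 0) (hy0 : y 0 = 0) (ha0 : a 0 = 0)
    (hxup : ∀ k, f' (x (k + 1)) + a k + ρ • (x (k + 1) - y k) = 0)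
    (hyup : ∀ k, y (k + 1) = mulE (W ^ B) (x (k + 1)))
    (haup : ∀ k, a (k + 1) = a k + ρ • (x (k + 1) - y (k + 1)))
    (xstar : EuclideanSpace ℝ (Fin n))
    (hxstar_cons : mulE (avgMatrix n) xstar = xstar)
    (hxstar_min : ∀ z, mulE (avgMatrix n) z = z → f xstar ≤ f z)
    (astar : EuclideanSpace ℝ (Fin n)) (hastar : astar = -f' xstar) :
    (∀ k, 1 ≤ k →
      ‖x k - mulE (avgMatrix n) (x k)‖ ≤ 1 / μ * ‖(a k - astar) + ρ • (y k - y (k - 1))‖) ∧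
    (∀ lam : ℝ, lam ∈ Set.Ioo (0 : ℝ) 1 → ∀ K : ℕ,
      seqNormK (fun k => x k - mulE (avgMatrix n) (x k)) lam K ≤
        1 / μ * seqNormK (fun k => (a k - astar) + ρ • (y k - y (k - 1))) lam K) :=
  admm_first_arrow_general f f' μ hμ hsc ρ x y a hx0 hxup haup xstar hxstar_cons astar hastar
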